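/- Every prefix and every suffix of an admissible word is admissible. -/

import Mathlib

/-! Lowering the first letter of an admissible word keeps it admissible: the condition
`z₁ - 1 ≤ z₂` only gets weaker and the contracted letter does not grow. The contracted letter is
at least `z₂`, so dropping the first letter is such a lowering, which gives suffixes. For
prefixes, the contractions of `u ++ v` act only on letters of `u` until `u` has shrunk to a
single letter. -/

/-- Admissible words on ℕ. -/
def Admissible : List ℕ → Prop
  | [] => True
  | [_] => True
  | a :: b :: t =>
      a - 1 ≤ b ∧ Admissible ((if a - 1 ≤ b ∧ b ≤ a + 1 then max a b + 1 else b) :: t)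
termination_by l => l.length

namespace Admissible

theorem of_cons_of_le : ∀ {t : List ℕ} {c c' : ℕ}, c' ≤ c →
    Admissible (c :: t) → Admissible (c' :: t)
  | [], _, _, _, _ => by rw [Admissible]; trivial
  | d :: t, c, c', hle, h => by
    rw [Admissible] at h ⊢
    obtain ⟨hd, hrest⟩ := h
    refine ⟨by omega, of_cons_of_le ?_ hrest⟩
    split_ifs <;> omega

theorem of_cons {a : ℕ} : ∀ {v : List ℕ}, Admissible (a :: v) → Admissible v
  | [], _ => by rw [Admissible]; trivial
  | b :: t, h => by
    rw [Admissible] at h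
    exact of_cons_of_le (by split_ifs <;> omega) h.2

theorem of_append_left : ∀ {u v : List ℕ}, Admissible (u ++ v) → Admissible u
  | [], _, _ => by rw [Admissible]; trivial
  | [_], _, _ => by rw [Admissible]; trivial
  | a :: b :: t, v, h => by
    rw [List.cons_append, List.cons_append, Admissible] at h
    rw [Admissible]
    exact ⟨h.1, of_append_left (v := v) (by rw [List.cons_append]; exact h.2)⟩
termination_by u => u.length

theorem of_append_right : ∀ {u v : List ℕ}, Admissible (u ++ v) → Admissible v
  | [], _, h => h
  | _ :: u, _, h => of_append_right (u := u) (of_cons h)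

end Admissible

theorem admissible_prefix_suffix (z : List ℕ) (h : Admissible z) :
    ∀ u v : List ℕ, z = u ++ v → Admissible u ∧ Admissible v := by
  rintro u v rfl
  exact ⟨h.of_append_left, h.of_append_right⟩
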